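/- arXiv:0803.2771 — 3 statements merged into one kernel-verified Lean document; each statement's English description precedes it below -/
import Mathlib

section
/- Let m be a natural number and let C_{i,j} be positive real numbers given for all indices 0 ≤ j < i ≤ m. Then there exists a positive real number ε with ε < 1/2 such that for any nonnegative real numbers a_0, a_1, ..., a_m, if for every i with 0 ≤ i ≤ m one has a_i ≤ ε·(∑_{j=0}^{m} a_j) + ∑_{0 ≤ j < i} C_{i,j}·a_j, then a_i = 0 for all 0 ≤ i ≤ m. -/
/-!
Bounding each `C i j` by a single constant `B ≥ 0`, the hypotheses say
`a i ≤ ε S + B ∑_{j<i} a j` with `S = ∑_{j ≤ m} a j`.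
A discrete Grönwall argument turns this into `a i ≤ ε S (1 + B) ^ i`, and summing over `i ≤ m`
gives `S ≤ ε (m + 1) (1 + B) ^ m S`.
Choosing `ε = 1 / (4 (m + 1) (1 + B) ^ m)` makes the factor `1 / 4`, so `S = 0`.
-/

open Finset

theorem le_mul_one_add_pow_of_le_add_mul_sum {a : ℕ → ℝ} {e B : ℝ} (hB : 0 ≤ B) {n : ℕ}
    (h : ∀ i ≤ n, a i ≤ e + B * ∑ j ∈ range i, a j) :
    ∀ i ≤ n, a i ≤ e * (1 + B) ^ i := by
  intro i
  induction i using Nat.strong_induction_on with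
  | _ i ih =>
    intro hi
    have hsum : ∑ j ∈ range i, a j ≤ ∑ j ∈ range i, e * (1 + B) ^ j :=
      sum_le_sum fun j hj => ih j (mem_range.1 hj) (by grind)
    have hgeom : B * ∑ j ∈ range i, (1 + B) ^ j = (1 + B) ^ i - 1 := by
      simpa [mul_comm] using geom_sum_mul (1 + B) i
    calc a i ≤ e + B * ∑ j ∈ range i, e * (1 + B) ^ j :=
          (h i hi).trans (by gcongr)
      _ = e * (1 + B) ^ i := by rw [← mul_sum, mul_left_comm, hgeom]; ring

theorem eq_zero_of_le_mul_sum {ι : Type*} {s : Finset ι} {a : ι → ℝ} {δ : ℝ}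
    (ha : ∀ i ∈ s, 0 ≤ a i) (hδ : δ * #s < 1)
    (h : ∀ i ∈ s, a i ≤ δ * ∑ j ∈ s, a j) :
    ∀ i ∈ s, a i = 0 := by
  have hS : 0 ≤ ∑ j ∈ s, a j := sum_nonneg ha
  have hle : ∑ j ∈ s, a j ≤ δ * #s * ∑ j ∈ s, a j := by
    calc ∑ j ∈ s, a j ≤ ∑ _j ∈ s, δ * ∑ j ∈ s, a j := sum_le_sum h
      _ = δ * #s * ∑ j ∈ s, a j := by rw [sum_const, nsmul_eq_mul]; ring
  have hS0 : ∑ j ∈ s, a j = 0 := by nlinarith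
  exact (sum_eq_zero_iff_of_nonneg ha).1 hS0

theorem exists_nonneg_forall_le {ι : Type*} (s : Finset ι) (f : ι → ℝ) :
    ∃ B, 0 ≤ B ∧ ∀ i ∈ s, f i ≤ B :=
  ⟨∑ i ∈ s, |f i|, sum_nonneg fun _ _ => abs_nonneg _,
    fun _ hi => (le_abs_self _).trans
      (single_le_sum (f := fun i => |f i|) (fun _ _ => abs_nonneg _) hi)⟩

theorem sublemma_norm_estimate_general (m : ℕ) (C : ℕ → ℕ → ℝ) :
    ∃ ε : ℝ, 0 < ε ∧ ε < 1 / 2 ∧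
      ∀ a : ℕ → ℝ, (∀ i, i ≤ m → 0 ≤ a i) →
        (∀ i, i ≤ m →
          a i ≤ ε * (∑ j ∈ Finset.range (m + 1), a j)
            + ∑ j ∈ Finset.range i, C i j * a j) →
        ∀ i, i ≤ m → a i = 0 := by
  obtain ⟨B, hB, hCB⟩ :=
    exists_nonneg_forall_le (range (m + 1) ×ˢ range (m + 1)) fun p => C p.1 p.2
  have hK : 1 ≤ ((m : ℝ) + 1) * (1 + B) ^ m :=
    one_le_mul_of_one_le_of_one_le (by simp) (one_le_pow₀ (by linarith))
  set ε := 1 / (4 * (((m : ℝ) + 1) * (1 + B) ^ m))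
  refine ⟨ε, by positivity, by simp only [ε]; rw [div_lt_div_iff₀] <;> linarith, ?_⟩
  intro a ha h
  set S := ∑ j ∈ range (m + 1), a j
  have hεS : 0 ≤ ε * S := mul_nonneg (by positivity) (sum_nonneg fun j hj => ha j (by grind))
  have hgronwall : ∀ i ≤ m, a i ≤ ε * S * (1 + B) ^ i := by
    refine le_mul_one_add_pow_of_le_add_mul_sum hB fun i hi => (h i hi).trans ?_
    gcongr ε * S + ?_
    rw [mul_sum]
    refine sum_le_sum fun j hj => ?_
    exact mul_le_mul_of_nonneg_right (hCB (i, j) (by grind)) (ha j (by grind))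
  have hsmall : ∀ i ∈ range (m + 1), a i ≤ ε * (1 + B) ^ m * S := fun i hi => by
    have him : i ≤ m := by grind
    calc a i ≤ ε * S * (1 + B) ^ i := hgronwall i him
      _ ≤ ε * S * (1 + B) ^ m := by gcongr; linarith
      _ = ε * (1 + B) ^ m * S := by ring
  have hfactor : ε * (1 + B) ^ m * #(range (m + 1)) < 1 := by
    calc ε * (1 + B) ^ m * #(range (m + 1)) = 1 / 4 := by
          simp only [ε, card_range, Nat.cast_succ]; field_simp
      _ < 1 := by norm_num
  intro i hi
  exact eq_zero_of_le_mul_sum (fun j hj => ha j (by grind)) hfactor hsmall i (by grind)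

/-- Sublemma (Section 2.3): given positive constants `C i j` for `0 ≤ j < i ≤ m`,
there exists `0 < ε < 1/2` such that for any nonnegative reals `a 0, …, a m`,
the inequalities `a i ≤ ε • (∑ j ≤ m, a j) + ∑_{j < i} C i j • a j` force all `a i = 0`. -/
theorem sublemma_norm_estimate (m : ℕ) (C : ℕ → ℕ → ℝ)
    (hC : ∀ i j, j < i → i ≤ m → 0 < C i j) :
    ∃ ε : ℝ, 0 < ε ∧ ε < 1 / 2 ∧
      ∀ a : ℕ → ℝ, (∀ i, i ≤ m → 0 ≤ a i) →
        (∀ i, i ≤ m →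
          a i ≤ ε * (∑ j ∈ Finset.range (m + 1), a j)
            + ∑ j ∈ Finset.range i, C i j * a j) →
        ∀ i, i ≤ m → a i = 0 :=
  sublemma_norm_estimate_general m C
end

section
/- Let n, n₁, n₂ be nonnegative integers with n₁ + n₂ > n. For any complex numbers a, a′ there exist real numbers C > 0, ε > 0 and r > 1 such that the following holds: for every complex polynomial f of degree ≤ n and every z₀ ∈ ℂ with 0 ≤ Re z₀ < 1 and y₀ := Im z₀ > r, if |f^{(k)}(z₀) − δ_{k,0}·a| ≤ ε·A(f,z₀)/y₀^k for all 0 ≤ k < n₁, and |f̄^{(k)}(z₀) − δ_{k,0}·a′| ≤ ε·A(f,z₀)/y₀^k for all 0 ≤ k < n₂, then A(f,z₀) ≤ C. Here δ_{k,0} equals 1 if k = 0 and 0 otherwise. -/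
open Polynomial

/-- `A f z₀ = ∑_{k ≥ 0} |f⁽ᵏ⁾(0)| · (Im z₀)^k` for a complex polynomial `f`
(the sum is finite: only `k ≤ deg f` contribute). -/
noncomputable def polyNormA (f : Polynomial ℂ) (z₀ : ℂ) : ℝ :=
  ∑ k ∈ Finset.range (f.natDegree + 1),
    ‖((Polynomial.derivative^[k] f).eval 0)‖ * z₀.im ^ k

/-!
With `y₀ = Im z₀`, the rescaled polynomial `g(w) = f(y₀ w)` has Taylor coordinates
`b k = g⁽ᵏ⁾(0) = y₀ᵏ f⁽ᵏ⁾(0)`, so `A(f, z₀) = ∑ ‖b k‖`, and `y₀ᵐ f⁽ᵐ⁾(z₀) = g⁽ᵐ⁾(w)` at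
`w = z₀ / y₀`, a point within `1 / y₀` of `i`. The hypotheses therefore say that the jets of `g`
and `ḡ` at `w` are `ε A`-close to `(a, 0, …)` and `(a', 0, …)`.
At `w = i` the real-linear jet map `b ↦ (g⁽ᵐ⁾(i))_{m < n₁}, (ḡ⁽ᵐ⁾(i))_{m < n₂}` is injective:
`ḡ⁽ᵐ⁾(i)` is the conjugate of `g⁽ᵐ⁾(-i)`, and a nonzero `g` of degree `≤ n < n₁ + n₂` cannot
vanish to order `n₁` at `i` and to order `n₂` at `-i`. An injective map on a finite-dimensional
space stays uniformly bounded below under small perturbations, so `A ≤ K (ε A + ‖a‖ + ‖a'‖)`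
for `w` near `i`, which bounds `A` once `ε K < 1`.
-/

open Filter Topology ComplexConjugate

section OperatorLowerBound

variable {X 𝕜 E F : Type*} [TopologicalSpace X] [NontriviallyNormedField 𝕜]
  [NormedAddCommGroup E] [NormedSpace 𝕜 E] [NormedAddCommGroup F] [NormedSpace 𝕜 F]
  {T : X → E →L[𝕜] F} {x₀ : X}

theorem ContinuousAt.eventually_norm_le_two_mul_norm_apply (hT : ContinuousAt T x₀) {K : ℝ}
    (hK : 0 < K) (hbound : ∀ v, ‖v‖ ≤ K * ‖T x₀ v‖) :
    ∀ᶠ x in 𝓝 x₀, ∀ v, ‖v‖ ≤ 2 * K * ‖T x v‖ := by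
  filter_upwards [hT (Metric.ball_mem_nhds _ (inv_pos.2 (mul_pos two_pos hK)))] with x hx v
  have hclose : ‖(T x₀ - T x) v‖ ≤ (2 * K)⁻¹ * ‖v‖ := by
    refine ((T x₀ - T x).le_opNorm v).trans (mul_le_mul_of_nonneg_right ?_ (norm_nonneg v))
    rw [← dist_eq_norm']
    exact (Metric.mem_ball.1 hx).le
  have htri : ‖T x₀ v‖ ≤ ‖T x v‖ + (2 * K)⁻¹ * ‖v‖ := by
    calc ‖T x₀ v‖ = ‖T x v + (T x₀ - T x) v‖ := by simp
      _ ≤ _ := (norm_add_le _ _).trans (by gcongr)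
  have hhalf : K * (2 * K)⁻¹ = 2⁻¹ := by field_simp
  have := calc ‖v‖ ≤ K * ‖T x₀ v‖ := hbound v
    _ ≤ K * (‖T x v‖ + (2 * K)⁻¹ * ‖v‖) := by gcongr
    _ = K * ‖T x v‖ + 2⁻¹ * ‖v‖ := by rw [mul_add, ← mul_assoc, hhalf]
  linarith

theorem ContinuousAt.exists_pos_eventually_norm_le_mul_norm_apply [CompleteSpace 𝕜]
    [FiniteDimensional 𝕜 E] (hT : ContinuousAt T x₀) (hinj : Function.Injective (T x₀)) :
    ∃ K > 0, ∀ᶠ x in 𝓝 x₀, ∀ v, ‖v‖ ≤ K * ‖T x v‖ := by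
  obtain ⟨K, hK, hanti⟩ :=
    (T x₀ : E →ₗ[𝕜] F).exists_antilipschitzWith (LinearMap.ker_eq_bot.2 hinj)
  exact ⟨2 * K, by positivity,
    hT.eventually_norm_le_two_mul_norm_apply hK ((T x₀).bound_of_antilipschitz hanti)⟩

end OperatorLowerBound

namespace Polynomial

section VanishingOrder

variable {R : Type*} [CommRing R] [IsDomain R] [CharZero R]

theorem X_sub_C_pow_dvd_of_iterate_derivative_isRoot {p : R[X]} {t : R} {n : ℕ}
    (h : ∀ m < n, (derivative^[m] p).IsRoot t) : (X - C t) ^ n ∣ p := by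
  rcases eq_or_ne p 0 with rfl | hp
  · exact dvd_zero _
  rcases n with _ | n
  · simp
  exact (pow_dvd_pow _ (lt_rootMultiplicity_of_isRoot_iterate_derivative hp
    fun m hm => h m (Nat.lt_succ_of_le hm))).trans (p.pow_rootMultiplicity_dvd t)

theorem eq_zero_of_iterate_derivative_isRoot {p : R[X]} {z₁ z₂ : R} (hz : IsUnit (z₁ - z₂))
    {n₁ n₂ : ℕ} (hdeg : p.natDegree < n₁ + n₂) (h₁ : ∀ m < n₁, (derivative^[m] p).IsRoot z₁)
    (h₂ : ∀ m < n₂, (derivative^[m] p).IsRoot z₂) : p = 0 := by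
  by_contra hp
  have hdvd : (X - C z₁) ^ n₁ * (X - C z₂) ^ n₂ ∣ p :=
    (isCoprime_X_sub_C_of_isUnit_sub hz).pow.mul_dvd
      (X_sub_C_pow_dvd_of_iterate_derivative_isRoot h₁)
      (X_sub_C_pow_dvd_of_iterate_derivative_isRoot h₂)
  have := natDegree_le_of_dvd hdvd hp
  rw [((monic_X_sub_C z₁).pow n₁).natDegree_mul ((monic_X_sub_C z₂).pow n₂),
    natDegree_pow, natDegree_pow, natDegree_X_sub_C, natDegree_X_sub_C] at this
  omega

end VanishingOrder

theorem iterate_derivative_eval_zero {R : Type*} [Semiring R] (p : R[X]) (k : ℕ) :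
    (derivative^[k] p).eval 0 = p.coeff k * k.factorial := by
  rw [← coeff_zero_eq_eval_zero, coeff_iterate_derivative, zero_add, Nat.descFactorial_self,
    nsmul_eq_mul, Nat.cast_comm]

theorem iterate_derivative_comp_C_mul_X {R : Type*} [CommSemiring R] (p : R[X]) (c : R)
    (m : ℕ) : derivative^[m] (p.comp (C c * X)) = C c ^ m * (derivative^[m] p).comp (C c * X) := by
  induction m with
  | zero => simp
  | succ m ih =>
    rw [Function.iterate_succ_apply', ih, ← C_pow, derivative_C_mul, derivative_comp,
      derivative_C_mul_X, Function.iterate_succ_apply', C_pow, pow_succ]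
    ring

noncomputable def taylorCoords {R : Type*} [Semiring R] (n : ℕ) (p : R[X]) : Fin (n + 1) → R :=
  fun k => (derivative^[k] p).eval 0

section TaylorCoordinates

variable {K : Type*} [Field K] (n : ℕ)

noncomputable def ofTaylorCoords : (Fin (n + 1) → K) →ₗ[K] K[X] where
  toFun b := ∑ k : Fin (n + 1), C (b k / (k : ℕ).factorial) * X ^ (k : ℕ)
  map_add' b c := by
    simp only [Pi.add_apply, add_div, C_add, add_mul, Finset.sum_add_distrib]
  map_smul' s b := by
    simp only [Pi.smul_apply, smul_eq_mul, mul_div_assoc, C_mul, mul_assoc, RingHom.id_apply,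
      smul_eq_C_mul, Finset.mul_sum]

theorem ofTaylorCoords_apply (b : Fin (n + 1) → K) :
    ofTaylorCoords n b = ∑ k : Fin (n + 1), C (b k / (k : ℕ).factorial) * X ^ (k : ℕ) :=
  rfl

theorem natDegree_ofTaylorCoords_le (b : Fin (n + 1) → K) :
    (ofTaylorCoords n b).natDegree ≤ n :=
  (ofTaylorCoords_apply n b).symm ▸ natDegree_sum_le_of_forall_le _ _ fun k _ =>
    (natDegree_C_mul_X_pow_le _ _).trans (Nat.lt_succ_iff.1 k.2)

theorem taylorCoords_ofTaylorCoords [CharZero K] (b : Fin (n + 1) → K) :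
    taylorCoords n (ofTaylorCoords n b) = b := by
  funext k
  have hk : ((k : ℕ).factorial : K) ≠ 0 := Nat.cast_ne_zero.2 (Nat.factorial_ne_zero _)
  simp only [taylorCoords, iterate_derivative_eval_zero, ofTaylorCoords_apply, finsetSum_coeff,
    coeff_C_mul_X_pow]
  rw [Finset.sum_eq_single k (fun j _ hj => if_neg (Fin.val_injective.ne hj.symm)) (by simp),
    if_pos rfl, div_mul_cancel₀ _ hk]

theorem ofTaylorCoords_taylorCoords [CharZero K] {p : K[X]} (hp : p.natDegree ≤ n) :
    ofTaylorCoords n (taylorCoords n p) = p := by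
  conv_rhs => rw [p.as_sum_range_C_mul_X_pow' (Nat.lt_succ_of_le hp)]
  rw [← Fin.sum_univ_eq_sum_range (fun k => C (p.coeff k) * X ^ k) (n + 1), ofTaylorCoords_apply]
  refine Finset.sum_congr rfl fun k _ => ?_
  have hk : ((k : ℕ).factorial : K) ≠ 0 := Nat.cast_ne_zero.2 (Nat.factorial_ne_zero _)
  simp [taylorCoords, iterate_derivative_eval_zero, mul_div_cancel_right₀ _ hk]

end TaylorCoordinates

theorem iterate_derivative_map_conj_eval (p : ℂ[X]) (m : ℕ) (z : ℂ) :
    (derivative^[m] (p.map (starRingEnd ℂ))).eval z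
      = conj ((derivative^[m] p).eval (conj z)) := by
  rw [iterate_derivative_map, eval_map, ← eval₂_hom, Complex.conj_conj]

end Polynomial

noncomputable def jetMap (n n₁ n₂ : ℕ) (w : ℂ) :
    (Fin (n + 1) → ℂ) →ₗ[ℝ] (Fin n₁ → ℂ) × (Fin n₂ → ℂ) where
  -- the second component is `ḡ⁽ᵐ⁾(w)`, written so that real-linearity is evident
  toFun b := (fun m : Fin n₁ => (derivative^[m] (ofTaylorCoords n b)).eval w,
    fun m : Fin n₂ => conj ((derivative^[m] (ofTaylorCoords n b)).eval (conj w)))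
  map_add' b c := by ext m <;> simp
  map_smul' s b := by
    ext m <;> simp [LinearMap.map_smul_of_tower, iterate_derivative_smul]

section JetMap

variable {n n₁ n₂ : ℕ}

@[simp]
theorem jetMap_apply (w : ℂ) (b : Fin (n + 1) → ℂ) :
    jetMap n n₁ n₂ w b = (fun m : Fin n₁ => (derivative^[m] (ofTaylorCoords n b)).eval w,
      fun m : Fin n₂ => conj ((derivative^[m] (ofTaylorCoords n b)).eval (conj w))) :=
  rfl

theorem continuous_jetMap :
    Continuous fun w => LinearMap.toContinuousLinearMap (jetMap n n₁ n₂ w) := by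
  refine continuous_clm_apply.2 fun b => ?_
  simp only [LinearMap.coe_toContinuousLinearMap', jetMap_apply]
  exact (continuous_pi fun m : Fin n₁ => (derivative^[m] (ofTaylorCoords n b)).continuous).prodMk
    (continuous_pi fun m : Fin n₂ => Complex.continuous_conj.comp
      ((derivative^[m] (ofTaylorCoords n b)).continuous.comp Complex.continuous_conj))

theorem injective_jetMap_I (hn : n < n₁ + n₂) :
    Function.Injective (jetMap n n₁ n₂ Complex.I) := by
  refine (injective_iff_map_eq_zero _).2 fun b hb => ?_
  have hI : IsUnit (Complex.I - -Complex.I) := by simp [← two_mul, Complex.I_ne_zero]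
  have hzero : ofTaylorCoords n b = 0 := by
    refine eq_zero_of_iterate_derivative_isRoot hI
      ((natDegree_ofTaylorCoords_le n b).trans_lt hn) (fun m hm => ?_) (fun m hm => ?_)
    · simpa using congrFun (congrArg Prod.fst hb) ⟨m, hm⟩
    · simpa using congrFun (congrArg Prod.snd hb) ⟨m, hm⟩
  rw [← taylorCoords_ofTaylorCoords n b, hzero]
  funext k
  simp [taylorCoords]

theorem exists_pos_norm_le_mul_norm_jetMap (hn : n < n₁ + n₂) :
    ∃ K > 0, ∃ δ > 0, ∀ w, ‖w - Complex.I‖ < δ →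
      ∀ b, ‖b‖ ≤ K * ‖jetMap n n₁ n₂ w b‖ := by
  obtain ⟨K, hK, hev⟩ := continuous_jetMap.continuousAt
    |>.exists_pos_eventually_norm_le_mul_norm_apply (injective_jetMap_I hn)
  obtain ⟨δ, hδ, hball⟩ := Metric.eventually_nhds_iff.1 hev
  exact ⟨K, hK, δ, hδ, fun w hw => hball (by rwa [dist_eq_norm])⟩

theorem jetMap_div_ofReal_taylorCoords_comp {f : ℂ[X]} (hf : f.natDegree ≤ n) (z : ℂ) {y : ℝ}
    (hy : y ≠ 0) :
    jetMap n n₁ n₂ (z / y) (taylorCoords n (f.comp (C (y : ℂ) * X))) =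
      (fun m : Fin n₁ => (y : ℂ) ^ (m : ℕ) * (derivative^[m] f).eval z,
        fun m : Fin n₂ => (y : ℂ) ^ (m : ℕ) * (derivative^[m] (f.map (starRingEnd ℂ))).eval z) := by
  have hdeg : (f.comp (C (y : ℂ) * X)).natDegree ≤ n :=
    natDegree_comp_le.trans (by
      simpa using Nat.mul_le_mul hf ((natDegree_C_mul_le _ _).trans natDegree_X_le))
  have hyC : (y : ℂ) ≠ 0 := Complex.ofReal_ne_zero.2 hy
  rw [jetMap_apply, ofTaylorCoords_taylorCoords n hdeg]
  ext m
  · simp [iterate_derivative_comp_C_mul_X, mul_div_cancel₀ _ hyC]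
  · simp only [iterate_derivative_map_conj_eval]
    simp [iterate_derivative_comp_C_mul_X, mul_div_cancel₀ _ hyC]

end JetMap

theorem polyNormA_eq_sum_norm_taylorCoords {n : ℕ} {f : ℂ[X]} (hf : f.natDegree ≤ n) {z : ℂ}
    (hz : 0 ≤ z.im) : polyNormA f z = ∑ k, ‖taylorCoords n (f.comp (C (z.im : ℂ) * X)) k‖ := by
  rw [polyNormA, Finset.sum_subset (Finset.range_subset_range.2 (Nat.succ_le_succ hf)),
    ← Fin.sum_univ_eq_sum_range (fun k => ‖(derivative^[k] f).eval 0‖ * z.im ^ k)]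
  · refine Finset.sum_congr rfl fun k _ => ?_
    simp only [taylorCoords, iterate_derivative_comp_C_mul_X, eval_mul, eval_pow, eval_C,
      eval_comp, eval_X, mul_zero, Complex.norm_mul, norm_pow, Complex.norm_real,
      Real.norm_of_nonneg hz]
    ring
  · intro k _ hk
    rw [iterate_derivative_eq_zero (by simpa using hk)]
    simp

theorem norm_div_im_sub_I_lt {z : ℂ} {δ : ℝ} (hδ : 0 < δ) (h₀ : 0 ≤ z.re) (h₁ : z.re < 1)
    (hy : δ⁻¹ < z.im) : ‖z / z.im - Complex.I‖ < δ := by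
  have hy₀ : 0 < z.im := (inv_pos.2 hδ).trans hy
  have hre : z / z.im - Complex.I = (z.re / z.im : ℝ) := by
    apply Complex.ext <;> field_simp <;> simp [hy₀.ne']
  rw [hre, Complex.norm_real, Real.norm_of_nonneg (div_nonneg h₀ hy₀.le)]
  calc z.re / z.im < 1 / z.im := by gcongr
    _ < δ := by simpa using inv_lt_of_inv_lt₀ hδ hy

theorem pi_norm_ofReal_pow_mul_le {k : ℕ} {t : ℝ} (ht : 0 < t) {u : ℕ → ℂ} {a : ℂ} {c : ℝ}
    (hc : 0 ≤ c) (h : ∀ m < k, ‖u m - if m = 0 then a else 0‖ ≤ c / t ^ m) :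
    ‖fun m : Fin k => (t : ℂ) ^ (m : ℕ) * u m‖ ≤ c + ‖a‖ := by
  refine (pi_norm_le_iff_of_nonneg (by positivity)).2 fun m => ?_
  have hscale : (t : ℂ) ^ (m : ℕ) * u m - (if (m : ℕ) = 0 then a else 0)
      = (t : ℂ) ^ (m : ℕ) * (u m - if (m : ℕ) = 0 then a else 0) := by
    split_ifs with hm <;> simp [hm, mul_sub]
  have hdev : ‖(t : ℂ) ^ (m : ℕ) * u m - (if (m : ℕ) = 0 then a else 0)‖ ≤ c := by
    rw [hscale, norm_mul, norm_pow, Complex.norm_real, Real.norm_of_nonneg ht.le,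
      ← le_div_iff₀' (by positivity)]
    exact h m m.2
  have hδ : ‖(if (m : ℕ) = 0 then a else 0)‖ ≤ ‖a‖ := by split_ifs <;> simp
  linarith [norm_le_norm_sub_add ((t : ℂ) ^ (m : ℕ) * u m) (if (m : ℕ) = 0 then a else 0)]

/-- Lemma 2.5: let `n, n₁, n₂` be nonnegative integers with `n₁ + n₂ > n`.
For any `a, a' ∈ ℂ` there exist `C > 0`, `ε > 0`, `r > 1` such that for every
polynomial `f` of degree `≤ n` and every `z₀` with `0 ≤ Re z₀ < 1` and
`Im z₀ > r`, the conditions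
`|f⁽ᵏ⁾(z₀) − δ_{k,0} a| ≤ ε A(f,z₀)/y₀^k` for `0 ≤ k < n₁` and
`|f̄⁽ᵏ⁾(z₀) − δ_{k,0} a'| ≤ ε A(f,z₀)/y₀^k` for `0 ≤ k < n₂`
imply `A(f,z₀) ≤ C`, where `f̄` is `f` with conjugated coefficients. -/
theorem lemma_2_5 (n n₁ n₂ : ℕ) (hn : n < n₁ + n₂) (a a' : ℂ) :
    ∃ C ε r : ℝ, 0 < C ∧ 0 < ε ∧ 1 < r ∧
      ∀ (f : Polynomial ℂ) (z₀ : ℂ), f.natDegree ≤ n →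
        0 ≤ z₀.re → z₀.re < 1 → r < z₀.im →
        (∀ k < n₁,
          ‖((Polynomial.derivative^[k] f).eval z₀ - if k = 0 then a else 0)‖
            ≤ ε * polyNormA f z₀ / z₀.im ^ k) →
        (∀ k < n₂,
          ‖((Polynomial.derivative^[k] (f.map (starRingEnd ℂ))).eval z₀ -
                if k = 0 then a' else 0)‖
            ≤ ε * polyNormA f z₀ / z₀.im ^ k) →
        polyNormA f z₀ ≤ C := by
  obtain ⟨K, hK, δ, hδ, hjet⟩ := exists_pos_norm_le_mul_norm_jetMap hn
  set L : ℝ := (n + 1) * K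
  have hL : 0 < L := by positivity
  refine ⟨2 * L * (‖a‖ + ‖a'‖) + 1, (2 * L)⁻¹, max 2 δ⁻¹, by positivity, by positivity,
    one_lt_two.trans_le (le_max_left _ _), ?_⟩
  intro f z₀ hf hre₀ hre₁ hr h₁ h₂
  have hy : 0 < z₀.im := by linarith [le_max_left 2 δ⁻¹]
  set A := polyNormA f z₀
  set b := taylorCoords n (f.comp (C (z₀.im : ℂ) * X))
  have hA : A = ∑ k, ‖b k‖ := polyNormA_eq_sum_norm_taylorCoords hf hy.le
  have hA₀ : 0 ≤ A := hA ▸ Finset.sum_nonneg fun _ _ => norm_nonneg _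
  have hw := norm_div_im_sub_I_lt hδ hre₀ hre₁ ((le_max_right _ _).trans_lt hr)
  have hJ : ‖jetMap n n₁ n₂ (z₀ / z₀.im) b‖ ≤ (2 * L)⁻¹ * A + (‖a‖ + ‖a'‖) := by
    rw [jetMap_div_ofReal_taylorCoords_comp hf z₀ hy.ne', norm_prod_le_iff]
    exact ⟨(pi_norm_ofReal_pow_mul_le hy (by positivity) h₁).trans (by simp),
      (pi_norm_ofReal_pow_mul_le hy (by positivity) h₂).trans (by simp)⟩
  have hAL : A ≤ L * ((2 * L)⁻¹ * A + (‖a‖ + ‖a'‖)) := calc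
    A = ∑ k, ‖b k‖ := hA
    _ ≤ (n + 1) * ‖b‖ := by simpa using Pi.sum_norm_apply_le_norm b
    _ ≤ (n + 1) * (K * ‖jetMap n n₁ n₂ (z₀ / z₀.im) b‖) := by gcongr; exact hjet _ hw b
    _ ≤ L * ((2 * L)⁻¹ * A + (‖a‖ + ‖a'‖)) := by rw [← mul_assoc]; gcongr
  have hhalf : L * (2 * L)⁻¹ = 2⁻¹ := by field_simp
  nlinarith
end

section
/- Fix any real number r₀ and let S ⊂ ℂ × ℂ × ℂ be the set S := { (c·z + b, c, exp(2πi·z)) : c, b Gaussian integers, z ∈ ℂ with Im z > r₀ }. Then for every complex number γ and every nonzero integer a, the point (γ, a, 0) belongs to the topological closure of S in ℂ³. In particular, S is not closed in ℂ³. -/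
/-!
For any nonzero Gaussian integer `c`, taking `z = γ / c + n i` and `b = -n i c` keeps the first
two coordinates at `(γ, c)` while `Im z → ∞` drives `exp (2πiz)` to `0`. The limit point has
third coordinate `0`, which `exp` never attains, so it lies in the closure but not in the set.
-/

open Complex Filter Topology

theorem tendsto_exp_two_pi_I_mul_nhds_zero {ι : Type*} {l : Filter ι} {z : ι → ℂ}
    (hz : Tendsto (fun i ↦ (z i).im) l atTop) :
    Tendsto (fun i ↦ exp (2 * Real.pi * I * z i)) l (𝓝 0) := by
  have hq := ((Function.Periodic.qParam_tendsto one_pos).mono_right nhdsWithin_le_nhds).comp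
    (tendsto_comap_iff.mpr hz)
  simpa [Function.comp_def, Function.Periodic.qParam] using hq

def gaussianSectionSet (r₀ : ℝ) : Set (ℂ × ℂ × ℂ) :=
  {p | ∃ c b : GaussianInt, ∃ z : ℂ, r₀ < z.im ∧
    p = (GaussianInt.toComplex c * z + GaussianInt.toComplex b, GaussianInt.toComplex c,
      exp (2 * Real.pi * I * z))}

theorem mk_zero_notMem_gaussianSectionSet (r₀ : ℝ) (γ w : ℂ) :
    (γ, w, 0) ∉ gaussianSectionSet r₀ := by
  rintro ⟨c, b, z, -, h⟩
  exact exp_ne_zero _ (congrArg (·.2.2) h).symm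

theorem mk_mem_closure_gaussianSectionSet (r₀ : ℝ) (γ : ℂ) {c : GaussianInt} (hc : c ≠ 0) :
    (γ, GaussianInt.toComplex c, 0) ∈ closure (gaussianSectionSet r₀) := by
  have hc' : GaussianInt.toComplex c ≠ 0 := GaussianInt.toComplex_eq_zero.not.mpr hc
  set z : ℕ → ℂ := fun n ↦ γ / GaussianInt.toComplex c + n * I
  have him : Tendsto (fun n ↦ (z n).im) atTop atTop := by
    simpa [z] using tendsto_atTop_add_const_left atTop (γ / GaussianInt.toComplex c).im
      tendsto_natCast_atTop_atTop
  have hmem : ∀ᶠ n in atTop, (γ, GaussianInt.toComplex c, exp (2 * Real.pi * I * z n)) ∈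
      gaussianSectionSet r₀ := by
    filter_upwards [him.eventually_gt_atTop r₀] with n hn
    refine ⟨c, -(⟨0, n⟩ * c), z n, hn, ?_⟩
    have hfirst : GaussianInt.toComplex c * z n + GaussianInt.toComplex (-(⟨0, n⟩ * c)) = γ := by
      rw [map_neg, map_mul, GaussianInt.toComplex_def' 0 n]
      simp only [z]
      field_simp
      push_cast
      ring
    rw [hfirst]
  exact mem_closure_of_tendsto (tendsto_const_nhds.prodMk_nhds
    (tendsto_const_nhds.prodMk_nhds (tendsto_exp_two_pi_I_mul_nhds_zero him))) hmem

theorem not_isClosed_gaussianSectionSet (r₀ : ℝ) : ¬ IsClosed (gaussianSectionSet r₀) := by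
  intro hclosed
  have h := mk_mem_closure_gaussianSectionSet r₀ 0 one_ne_zero
  rw [hclosed.closure_eq] at h
  exact mk_zero_notMem_gaussianSectionSet r₀ _ _ h

/-- Example 2 (Section 1.10): with
`S = { (c·z + b, c, exp(2πi z)) : c, b Gaussian integers, Im z > r₀ } ⊆ ℂ³`,
every point `(γ, a, 0)` with `γ ∈ ℂ` and `a` a nonzero integer lies in the
closure of `S`; in particular `S` is not closed in `ℂ³`. -/
theorem example_2_not_closed (r₀ : ℝ)
    (S : Set (ℂ × ℂ × ℂ))
    (hS : S = {p : ℂ × ℂ × ℂ | ∃ c b : GaussianInt, ∃ z : ℂ, r₀ < z.im ∧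
      p = (GaussianInt.toComplex c * z + GaussianInt.toComplex b,
           GaussianInt.toComplex c,
           Complex.exp (2 * Real.pi * Complex.I * z))}) :
    (∀ (γ : ℂ) (a : ℤ), a ≠ 0 → ((γ, ((a : ℂ), (0 : ℂ))) : ℂ × ℂ × ℂ) ∈ closure S) ∧
      ¬ IsClosed S := by
  change S = gaussianSectionSet r₀ at hS
  subst hS
  refine ⟨fun γ a ha ↦ ?_, not_isClosed_gaussianSectionSet r₀⟩
  simpa using mk_mem_closure_gaussianSectionSet r₀ γ (Int.cast_ne_zero.mpr ha)
end
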